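/- arXiv:2305.17657 — 8 statements merged into one kernel-verified Lean document; each statement's English description precedes it below -/
import Mathlib

section
/- Let H be a complex Hilbert space and let x₁, x₂, e ∈ H with ‖e‖ = 1. Then |⟨x₁, e⟩ · ⟨x₂, e⟩| ≤ (|⟨x₁, x₂⟩| + ‖x₁‖ · ‖x₂‖) / 2 (Buzano's inequality). -/
open scoped InnerProductSpace

variable {H : Type*} [NormedAddCommGroup H] [InnerProductSpace ℂ H] [CompleteSpace H]

/-- The numerical radius of a bounded linear operator. -/
noncomputable def numRadius (T : H →L[ℂ] H) : ℝ :=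
  sSup {r : ℝ | ∃ x : H, ‖x‖ = 1 ∧ r = ‖⟪T x, x⟫_ℂ‖}

theorem buzano (x₁ x₂ e : H) (he : ‖e‖ = 1) :
    ‖⟪x₁, e⟫_ℂ * ⟪x₂, e⟫_ℂ‖ ≤ (‖⟪x₁, x₂⟫_ℂ‖ + ‖x₁‖ * ‖x₂‖) / 2 := by
  set c : ℂ := ⟪e, x₂⟫_ℂ with hc
  have key : ‖(2 * c) • e - x₂‖ = ‖x₂‖ := by
    have h := @norm_sub_sq ℂ H _ _ _ ((2 * c) • e) x₂
    have h1 : ‖(2 * c) • e‖ ^ 2 = 4 * ‖c‖ ^ 2 := by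
      rw [norm_smul, he]; simp [norm_mul]; ring
    have h2 : RCLike.re ⟪(2 * c) • e, x₂⟫_ℂ = 2 * ‖c‖ ^ 2 := by
      rw [inner_smul_left, ← hc]
      have hcc : (starRingEnd ℂ) (2 * c) * c = ((2 * ‖c‖ ^ 2 : ℝ) : ℂ) := by
        rw [map_mul, mul_assoc, mul_comm ((starRingEnd ℂ) c) c, Complex.mul_conj]
        simp [Complex.normSq_eq_norm_sq]
        exact Or.inl (Complex.conj_ofNat 2)
      rw [hcc]
      simp [← Complex.ofReal_pow]
    have hsq : ‖(2 * c) • e - x₂‖ ^ 2 = ‖x₂‖ ^ 2 := by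
      rw [h, h1, h2]; ring
    nlinarith [norm_nonneg ((2 * c) • e - x₂), norm_nonneg x₂, hsq]
  have hid : ⟪x₁, (2 * c) • e - x₂⟫_ℂ = 2 * c * ⟪x₁, e⟫_ℂ - ⟪x₁, x₂⟫_ℂ := by
    rw [inner_sub_right, inner_smul_right]
  have hcs : ‖⟪x₁, (2 * c) • e - x₂⟫_ℂ‖ ≤ ‖x₁‖ * ‖x₂‖ := by
    calc ‖⟪x₁, (2 * c) • e - x₂⟫_ℂ‖ ≤ ‖x₁‖ * ‖(2 * c) • e - x₂‖ := norm_inner_le_norm _ _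
    _ = ‖x₁‖ * ‖x₂‖ := by rw [key]
  have h2 : ‖2 * c * ⟪x₁, e⟫_ℂ‖ ≤ ‖⟪x₁, x₂⟫_ℂ‖ + ‖x₁‖ * ‖x₂‖ := by
    calc ‖2 * c * ⟪x₁, e⟫_ℂ‖ = ‖⟪x₁, (2 * c) • e - x₂⟫_ℂ + ⟪x₁, x₂⟫_ℂ‖ := by
          rw [hid]; ring_nf
        _ ≤ ‖⟪x₁, (2 * c) • e - x₂⟫_ℂ‖ + ‖⟪x₁, x₂⟫_ℂ‖ := norm_add_le _ _
        _ ≤ ‖x₁‖ * ‖x₂‖ + ‖⟪x₁, x₂⟫_ℂ‖ := by linarith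
        _ = ‖⟪x₁, x₂⟫_ℂ‖ + ‖x₁‖ * ‖x₂‖ := by ring
  have hnorm : ‖⟪x₁, e⟫_ℂ * ⟪x₂, e⟫_ℂ‖ = ‖c * ⟪x₁, e⟫_ℂ‖ := by
    rw [norm_mul, norm_mul, hc, ← inner_conj_symm e x₂, RCLike.norm_conj]
    ring
  have h3 : ‖2 * c * ⟪x₁, e⟫_ℂ‖ = 2 * ‖c * ⟪x₁, e⟫_ℂ‖ := by
    rw [mul_assoc, norm_mul]; simp
  rw [hnorm]
  linarith [h2, h3.symm.le]
end

section
/- Let H be a complex Hilbert space, n ≥ 2, and let x₁, x₂, …, xₙ, e ∈ H with ‖e‖ = 1. Then |∏_{k=1}^n ⟨xₖ, e⟩| ≤ (|⟨x₁, x₂⟩| · |∏_{k=3}^n ⟨xₖ, e⟩| + ∏_{k=1}^n ‖xₖ‖) / 2. -/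
open scoped InnerProductSpace

variable {H : Type*} [NormedAddCommGroup H] [InnerProductSpace ℂ H] [CompleteSpace H]

/-! Buzano's inequality reduces the first two factors of the product to `⟪x 1, x 2⟫`, and the
remaining factors are bounded by Cauchy–Schwarz. Buzano's inequality itself comes from the
reflection `R = 2 P - 1` in the line spanned by the unit vector `e`: since
`2 ⟪a, e⟫ ⟪e, b⟫ = ⟪R a, b⟫ + ⟪a, b⟫` and `R` is an isometry, the left side is at most
`‖a‖ ‖b‖ + ‖⟪a, b⟫‖`. -/

section Buzano

variable {𝕜 E : Type*} [RCLike 𝕜] [NormedAddCommGroup E] [InnerProductSpace 𝕜 E]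

theorem two_mul_inner_mul_inner_eq_inner_reflection_add {e : E} (he : ‖e‖ = 1) (a b : E) :
    2 * (⟪a, e⟫_𝕜 * ⟪e, b⟫_𝕜) = ⟪(𝕜 ∙ e).reflection a, b⟫_𝕜 + ⟪a, b⟫_𝕜 := by
  rw [Submodule.reflection_apply, Submodule.starProjection_unit_singleton 𝕜 he, inner_sub_left,
    two_nsmul, inner_add_left, inner_smul_left, inner_conj_symm]
  ring

theorem norm_inner_mul_inner_le {e : E} (he : ‖e‖ = 1) (a b : E) :
    ‖⟪a, e⟫_𝕜 * ⟪e, b⟫_𝕜‖ ≤ (‖a‖ * ‖b‖ + ‖⟪a, b⟫_𝕜‖) / 2 := by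
  have key := congrArg (‖·‖ : 𝕜 → ℝ) (two_mul_inner_mul_inner_eq_inner_reflection_add he a b)
  have hR : ‖⟪(𝕜 ∙ e).reflection a, b⟫_𝕜‖ ≤ ‖a‖ * ‖b‖ :=
    (norm_inner_le_norm _ _).trans_eq (by rw [LinearIsometryEquiv.norm_map])
  rw [norm_mul, RCLike.norm_two] at key
  linarith [norm_add_le ⟪(𝕜 ∙ e).reflection a, b⟫_𝕜 ⟪a, b⟫_𝕜]

theorem norm_prod_inner_le_prod_norm {ι : Type*} (s : Finset ι) (x : ι → E) {e : E}
    (he : ‖e‖ ≤ 1) : ‖∏ k ∈ s, ⟪x k, e⟫_𝕜‖ ≤ ∏ k ∈ s, ‖x k‖ := by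
  rw [norm_prod]
  refine Finset.prod_le_prod (fun k _ => norm_nonneg _) fun k _ => ?_
  calc ‖⟪x k, e⟫_𝕜‖ ≤ ‖x k‖ * ‖e‖ := norm_inner_le_norm _ _
    _ ≤ ‖x k‖ := mul_le_of_le_one_right (norm_nonneg _) he

end Buzano

theorem Finset.prod_Icc_one_eq_mul_mul_prod_Icc_three {M : Type*} [CommMonoid M] {n : ℕ}
    (hn : 2 ≤ n) (f : ℕ → M) :
    ∏ k ∈ Finset.Icc 1 n, f k = f 1 * (f 2 * ∏ k ∈ Finset.Icc 3 n, f k) := by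
  rw [← Finset.insert_Icc_add_one_left_eq_Icc (by omega : 1 ≤ n),
    ← Finset.insert_Icc_add_one_left_eq_Icc (by omega : 1 + 1 ≤ n),
    Finset.prod_insert (by simp), Finset.prod_insert (by simp)]
  rfl

theorem buzano_extension (n : ℕ) (hn : 2 ≤ n) (x : ℕ → H) (e : H) (he : ‖e‖ = 1) :
    ‖∏ k ∈ Finset.Icc 1 n, ⟪x k, e⟫_ℂ‖ ≤
      (‖⟪x 1, x 2⟫_ℂ‖ * ‖∏ k ∈ Finset.Icc 3 n, ⟪x k, e⟫_ℂ‖ +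
        ∏ k ∈ Finset.Icc 1 n, ‖x k‖) / 2 := by
  simp only [Finset.prod_Icc_one_eq_mul_mul_prod_Icc_three hn]
  set P := ∏ k ∈ Finset.Icc 3 n, ⟪x k, e⟫_ℂ
  have hBuzano : ‖⟪x 1, e⟫_ℂ‖ * ‖⟪x 2, e⟫_ℂ‖ ≤ (‖x 1‖ * ‖x 2‖ + ‖⟪x 1, x 2⟫_ℂ‖) / 2 := by
    simpa [norm_inner_symm (x 2) e] using norm_inner_mul_inner_le (𝕜 := ℂ) he (x 1) (x 2)
  have hP : ‖P‖ ≤ ∏ k ∈ Finset.Icc 3 n, ‖x k‖ := norm_prod_inner_le_prod_norm (𝕜 := ℂ) _ x he.le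
  calc ‖⟪x 1, e⟫_ℂ * (⟪x 2, e⟫_ℂ * P)‖ = ‖⟪x 1, e⟫_ℂ‖ * ‖⟪x 2, e⟫_ℂ‖ * ‖P‖ := by
        rw [norm_mul, norm_mul, mul_assoc]
    _ ≤ (‖x 1‖ * ‖x 2‖ + ‖⟪x 1, x 2⟫_ℂ‖) / 2 * ‖P‖ := by gcongr
    _ ≤ (‖⟪x 1, x 2⟫_ℂ‖ * ‖P‖ + ‖x 1‖ * (‖x 2‖ * ∏ k ∈ Finset.Icc 3 n, ‖x k‖)) / 2 := by
        have hPQ := mul_le_mul_of_nonneg_left hP (mul_nonneg (norm_nonneg (x 1)) (norm_nonneg (x 2)))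
        nlinarith
end

section
/- Let T be a bounded linear operator on a complex Hilbert space H. Then w(T)³ ≤ (1/4) w(T³) + (1/4)(‖T²‖ + ‖T*T + TT*‖) ‖T‖, where w denotes the numerical radius. -/
open scoped InnerProductSpace

variable {H : Type*} [NormedAddCommGroup H] [InnerProductSpace ℂ H] [CompleteSpace H]

namespace NumRadAux

set_option linter.unusedSectionVars false

lemma cube_expand (u v : ℂ) (h : u * v = 1) (T S : H →L[ℂ] H) :
    (u • T + v • S) ^ 3 = u ^ 3 • T ^ 3 + v ^ 3 • S ^ 3
      + u • (T * T * S + T * S * T + S * T * T)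
      + v • (T * S * S + S * T * S + S * S * T) := by
  have hu : u ≠ 0 := left_ne_zero_of_mul_eq_one h
  have hv : v = u⁻¹ := eq_inv_of_mul_eq_one_left (by rw [mul_comm]; exact h)
  subst hv
  simp only [pow_succ, pow_zero, one_mul, mul_add, add_mul, smul_mul_assoc,
    mul_smul_comm, smul_smul, smul_add, mul_assoc]
  match_scalars <;> field_simp

lemma numRadius_nonneg (T : H →L[ℂ] H) : 0 ≤ numRadius T :=
  Real.sSup_nonneg (by rintro r ⟨x, hx, rfl⟩; positivity)

lemma bddAbove_set (T : H →L[ℂ] H) :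
    BddAbove {r : ℝ | ∃ x : H, ‖x‖ = 1 ∧ r = ‖⟪T x, x⟫_ℂ‖} := by
  refine ⟨‖T‖, ?_⟩
  rintro r ⟨x, hx, rfl⟩
  calc ‖⟪T x, x⟫_ℂ‖ ≤ ‖T x‖ * ‖x‖ := norm_inner_le_norm _ _
    _ ≤ ‖T‖ * ‖x‖ * ‖x‖ := by gcongr; exact T.le_opNorm x
    _ = ‖T‖ := by rw [hx]; ring

lemma inner_le_numRadius (T : H →L[ℂ] H) {x : H} (hx : ‖x‖ = 1) :
    ‖⟪T x, x⟫_ℂ‖ ≤ numRadius T :=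
  le_csSup (bddAbove_set T) ⟨x, hx, rfl⟩

lemma sa_norm_le {A : H →L[ℂ] H} (hA : IsSelfAdjoint A) {K : ℝ} (hK : 0 ≤ K)
    (h : ∀ x : H, ‖x‖ = 1 → ‖⟪A x, x⟫_ℂ‖ ≤ K) : ‖A‖ ≤ K := by
  have hsym := hA.isSymmetric
  -- general (non-unit) bound
  have h2 : ∀ y : H, ‖⟪A y, y⟫_ℂ‖ ≤ K * ‖y‖ ^ 2 := by
    intro y
    rcases eq_or_ne y 0 with rfl | hy
    · simp [hK]
    · have hny : (0 : ℝ) < ‖y‖ := norm_pos_iff.mpr hy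
      have hu : ‖((‖y‖ : ℂ)⁻¹ • y : H)‖ = 1 := by
        rw [norm_smul, norm_inv, Complex.norm_real, Real.norm_eq_abs, abs_of_pos hny,
          inv_mul_cancel₀ hny.ne']
      have hb := h _ hu
      have heq : ⟪A ((‖y‖ : ℂ)⁻¹ • y), (‖y‖ : ℂ)⁻¹ • y⟫_ℂ
          = (starRingEnd ℂ) (‖y‖ : ℂ)⁻¹ * ((‖y‖ : ℂ)⁻¹ * ⟪A y, y⟫_ℂ) := by
        rw [map_smul, inner_smul_left, inner_smul_right]
      rw [heq, norm_mul, norm_mul] at hb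
      simp only [RCLike.norm_conj, norm_inv, Complex.norm_real, Real.norm_eq_abs,
        abs_of_pos hny] at hb
      have hb2 := mul_le_mul_of_nonneg_left hb (le_of_lt (mul_pos hny hny))
      calc ‖⟪A y, y⟫_ℂ‖ = ‖y‖ * ‖y‖ * (‖y‖⁻¹ * (‖y‖⁻¹ * ‖⟪A y, y⟫_ℂ‖)) := by
            field_simp
        _ ≤ ‖y‖ * ‖y‖ * K := hb2
        _ = K * ‖y‖ ^ 2 := by ring
  -- polarization bound on real parts
  have hre : ∀ x y : H, Complex.re ⟪A x, y⟫_ℂ ≤ (K / 2) * (‖x‖ ^ 2 + ‖y‖ ^ 2) := by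
    intro x y
    have expand : ⟪A (x + y), x + y⟫_ℂ - ⟪A (x - y), x - y⟫_ℂ
        = 2 * (⟪A x, y⟫_ℂ + ⟪A y, x⟫_ℂ) := by
      simp only [map_add, map_sub, inner_add_left, inner_add_right, inner_sub_left,
        inner_sub_right]
      ring
    have hc : ⟪A y, x⟫_ℂ = (starRingEnd ℂ) ⟪A x, y⟫_ℂ := by
      have h1 : ⟪A y, x⟫_ℂ = ⟪y, A x⟫_ℂ := hsym y x
      rw [h1, ← inner_conj_symm]
    rw [hc, Complex.add_conj] at expand
    have expand2 : ⟪A (x + y), x + y⟫_ℂ - ⟪A (x - y), x - y⟫_ℂ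
        = ((4 * (⟪A x, y⟫_ℂ).re : ℝ) : ℂ) := by
      rw [expand]; push_cast; ring
    have hre4 : 4 * (⟪A x, y⟫_ℂ).re
        = (⟪A (x + y), x + y⟫_ℂ).re - (⟪A (x - y), x - y⟫_ℂ).re := by
      have h5 := congrArg Complex.re expand2
      simp only [Complex.sub_re, Complex.ofReal_re] at h5
      linarith
    have b1 : (⟪A (x + y), x + y⟫_ℂ).re ≤ K * ‖x + y‖ ^ 2 := by
      refine le_trans ?_ (h2 (x + y))
      exact Complex.re_le_norm _
    have b2 : -(⟪A (x - y), x - y⟫_ℂ).re ≤ K * ‖x - y‖ ^ 2 := by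
      refine le_trans ?_ (h2 (x - y))
      exact le_trans (neg_le_abs _) (Complex.abs_re_le_norm _)
    have hpar : ‖x + y‖ ^ 2 + ‖x - y‖ ^ 2 = 2 * (‖x‖ ^ 2 + ‖y‖ ^ 2) := by
      have hp := parallelogram_law_with_norm ℂ x y
      ring_nf at hp ⊢
      linarith
    have hsum : 4 * (⟪A x, y⟫_ℂ).re ≤ K * ‖x + y‖ ^ 2 + K * ‖x - y‖ ^ 2 := by linarith
    have hKmul : K * ‖x + y‖ ^ 2 + K * ‖x - y‖ ^ 2 = 2 * K * (‖x‖ ^ 2 + ‖y‖ ^ 2) := by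
      rw [← mul_add, hpar]; ring
    linarith
  -- unit-vector norm bound
  have hunit : ∀ x : H, ‖x‖ = 1 → ‖A x‖ ≤ K := by
    intro x hx
    rcases eq_or_ne (A x) 0 with hAx | hAx
    · rw [hAx, norm_zero]; exact hK
    · have hnAx : (0 : ℝ) < ‖A x‖ := norm_pos_iff.mpr hAx
      set y : H := (‖A x‖ : ℂ)⁻¹ • A x with hy
      have hyn : ‖y‖ = 1 := by
        rw [hy, norm_smul, norm_inv, Complex.norm_real, Real.norm_eq_abs, abs_of_pos hnAx,
          inv_mul_cancel₀ hnAx.ne']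
      have hipC : ⟪A x, y⟫_ℂ = ((‖A x‖ : ℝ) : ℂ) := by
        rw [hy]
        simp [inner_smul_right, inner_self_eq_norm_sq_to_K, sq, ← mul_assoc,
          inv_mul_cancel₀ (Complex.ofReal_ne_zero.mpr hnAx.ne')]
      have hip : Complex.re ⟪A x, y⟫_ℂ = ‖A x‖ := by
        rw [hipC, Complex.ofReal_re]
      have h7 := hre x y
      rw [hip, hyn, hx] at h7
      nlinarith
  -- scaling
  refine A.opNorm_le_bound hK ?_
  intro x
  rcases eq_or_ne x 0 with rfl | hx0
  · simp
  · have hnx : (0 : ℝ) < ‖x‖ := norm_pos_iff.mpr hx0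
    have hx1 : ‖((‖x‖ : ℂ)⁻¹ • x : H)‖ = 1 := by
      rw [norm_smul, norm_inv, Complex.norm_real, Real.norm_eq_abs, abs_of_pos hnx,
        inv_mul_cancel₀ hnx.ne']
    have h8 := hunit _ hx1
    rw [map_smul, norm_smul, norm_inv, Complex.norm_real, Real.norm_eq_abs,
      abs_of_pos hnx] at h8
    calc ‖A x‖ = ‖x‖ * (‖x‖⁻¹ * ‖A x‖) := by field_simp
      _ ≤ ‖x‖ * K := mul_le_mul_of_nonneg_left h8 hnx.le
      _ = K * ‖x‖ := mul_comm _ _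

lemma sa_norm_cube {A : H →L[ℂ] H} (hA : IsSelfAdjoint A) : ‖A‖ ^ 3 ≤ ‖A ^ 3‖ := by
  have hstar : star A = A := hA.star_eq
  have h2 : ‖A ^ 2‖ = ‖A‖ ^ 2 := by
    calc ‖A ^ 2‖ = ‖star A * A‖ := by rw [hstar, pow_two]
      _ = ‖A‖ * ‖A‖ := CStarRing.norm_star_mul_self
      _ = ‖A‖ ^ 2 := (pow_two _).symm
  have h4 : ‖A ^ 4‖ = ‖A‖ ^ 4 := by
    have h9 : A ^ 4 = star (A ^ 2) * A ^ 2 := by rw [star_pow, hstar, ← pow_add]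
    rw [h9, CStarRing.norm_star_mul_self, h2]; ring
  rcases eq_or_lt_of_le (norm_nonneg A) with h0 | h0
  · rw [← h0]
    simpa using norm_nonneg (A ^ 3)
  · have hle : ‖A‖ ^ 4 ≤ ‖A‖ * ‖A ^ 3‖ := by
      rw [← h4, show (4 : ℕ) = 1 + 3 by norm_num, pow_add, pow_one]
      exact norm_mul_le _ _
    nlinarith


lemma key (T : H →L[ℂ] H) {x : H} (hx : ‖x‖ = 1) :
    ‖⟪T x, x⟫_ℂ‖ ^ 3 ≤ (1 / 4) * numRadius (T ^ 3) +
      (1 / 4) * (‖T ^ 2‖ + ‖ContinuousLinearMap.adjoint T * T + T * ContinuousLinearMap.adjoint T‖) * ‖T‖ := by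
  set S : H →L[ℂ] H := star T with hSdef
  have hST : (ContinuousLinearMap.adjoint T : H →L[ℂ] H) = S := (T.star_eq_adjoint).symm
  rw [hST]
  set c : ℂ := ⟪T x, x⟫_ℂ with hcdef
  have hRHS0 : 0 ≤ (1 / 4) * numRadius (T ^ 3) + (1 / 4) * (‖T ^ 2‖ + ‖S * T + T * S‖) * ‖T‖ := by
    have := numRadius_nonneg (T ^ 3)
    positivity
  rcases eq_or_ne c 0 with hc0 | hc0
  · rw [hc0]; simpa using hRHS0
  · have hn : (0 : ℝ) < ‖c‖ := norm_pos_iff.mpr hc0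
    have hcne : ((‖c‖ : ℝ) : ℂ) ≠ 0 := by
      simpa using hn.ne'
    set u : ℂ := c / (‖c‖ : ℂ) with hudef
    have hu1 : ‖u‖ = 1 := by
      rw [hudef, norm_div, Complex.norm_real, Real.norm_eq_abs, abs_of_pos hn,
        div_self hn.ne']
    set v : ℂ := (starRingEnd ℂ) u with hvdef
    have hv1 : ‖v‖ = 1 := by rw [hvdef, RCLike.norm_conj]; exact hu1
    have huv : u * v = 1 := by
      rw [hvdef, Complex.mul_conj]
      norm_cast
      rw [Complex.normSq_eq_norm_sq, hu1]
      norm_num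
    have hcc : (starRingEnd ℂ) c * c = ((‖c‖ : ℝ) : ℂ) ^ 2 := by
      rw [← Complex.normSq_eq_conj_mul_self]
      norm_cast
      rw [Complex.normSq_eq_norm_sq]
    have hvc : v * c = ((‖c‖ : ℝ) : ℂ) := by
      rw [hvdef, hudef, map_div₀, Complex.conj_ofReal, div_mul_eq_mul_div, hcc, sq,
        mul_div_assoc, div_self hcne, mul_one]
    have hcv : (starRingEnd ℂ) v = u := by rw [hvdef, Complex.conj_conj]
    have huc : u * (starRingEnd ℂ) c = ((‖c‖ : ℝ) : ℂ) := by
      have h10 := congrArg (starRingEnd ℂ) hvc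
      rw [map_mul, Complex.conj_ofReal, hcv] at h10
      exact h10
    set A : H →L[ℂ] H := u • T + v • S with hAdef
    have hAsa : IsSelfAdjoint A := by
      show star A = A
      rw [hAdef]
      rw [star_add, star_smul, star_smul, hSdef, star_star]
      simp only [RCLike.star_def]
      rw [← hvdef, hcv]
      exact add_comm _ _
    have hSx : ⟪S x, x⟫_ℂ = (starRingEnd ℂ) c := by
      have h11 : ⟪S x, x⟫_ℂ = ⟪x, T x⟫_ℂ := by
        rw [hSdef, T.star_eq_adjoint]
        exact ContinuousLinearMap.adjoint_inner_left T x x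
      rw [h11, hcdef]
      exact (inner_conj_symm x (T x)).symm
    have hAx : ⟪A x, x⟫_ℂ = ((2 * ‖c‖ : ℝ) : ℂ) := by
      rw [hAdef]
      simp only [ContinuousLinearMap.add_apply, ContinuousLinearMap.coe_smul', Pi.smul_apply,
        inner_add_left, inner_smul_left]
      rw [hSx, ← hcdef, ← hvdef, hcv, hvc, huc]
      push_cast
      ring
    have h2c : 2 * ‖c‖ ≤ ‖A‖ := by
      have h12 : ‖⟪A x, x⟫_ℂ‖ = 2 * ‖c‖ := by
        rw [hAx, Complex.norm_real, Real.norm_eq_abs, abs_of_nonneg (by positivity)]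
      calc 2 * ‖c‖ = ‖⟪A x, x⟫_ℂ‖ := h12.symm
        _ ≤ ‖A x‖ * ‖x‖ := norm_inner_le_norm _ _
        _ ≤ (‖A‖ * ‖x‖) * ‖x‖ := by gcongr; exact A.le_opNorm x
        _ = ‖A‖ := by rw [hx]; ring
    -- the three pieces
    set M : H →L[ℂ] H := T * T * S + T * S * T + S * T * T with hMdef
    set M' : H →L[ℂ] H := T * S * S + S * T * S + S * S * T with hM'def
    set B : H →L[ℂ] H := u ^ 3 • T ^ 3 + v ^ 3 • S ^ 3 with hBdef
    have hexp : A ^ 3 = B + u • M + v • M' := by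
      rw [hAdef, hBdef, hMdef, hM'def]
      exact cube_expand u v huv T S
    have hBsa : IsSelfAdjoint B := by
      show star B = B
      rw [hBdef, hSdef]
      simp only [star_add, star_smul, star_pow, star_star, RCLike.star_def]
      rw [← hvdef, hcv]
      exact add_comm _ _
    have hBnorm : ‖B‖ ≤ 2 * numRadius (T ^ 3) := by
      refine sa_norm_le hBsa (by have := numRadius_nonneg (T ^ 3); positivity) ?_
      intro y hy
      have hd : ⟪(S ^ 3) y, y⟫_ℂ = (starRingEnd ℂ) ⟪(T ^ 3) y, y⟫_ℂ := by
        have h13 : (S : H →L[ℂ] H) ^ 3 = ContinuousLinearMap.adjoint (T ^ 3) := by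
          rw [hSdef, ← star_pow, (T ^ 3).star_eq_adjoint]
        rw [h13, ContinuousLinearMap.adjoint_inner_left]
        exact (inner_conj_symm y ((T ^ 3) y)).symm
      have h14 : ⟪B y, y⟫_ℂ = v ^ 3 * ⟪(T ^ 3) y, y⟫_ℂ
          + (starRingEnd ℂ) (v ^ 3 * ⟪(T ^ 3) y, y⟫_ℂ) := by
        rw [hBdef]
        simp only [ContinuousLinearMap.add_apply, ContinuousLinearMap.coe_smul', Pi.smul_apply,
          inner_add_left, inner_smul_left, hd, map_mul, map_pow, hcv, ← hvdef]
      rw [h14]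
      calc ‖v ^ 3 * ⟪(T ^ 3) y, y⟫_ℂ + (starRingEnd ℂ) (v ^ 3 * ⟪(T ^ 3) y, y⟫_ℂ)‖
          ≤ ‖v ^ 3 * ⟪(T ^ 3) y, y⟫_ℂ‖ + ‖(starRingEnd ℂ) (v ^ 3 * ⟪(T ^ 3) y, y⟫_ℂ)‖ :=
            norm_add_le _ _
        _ = 2 * (‖v‖ ^ 3 * ‖⟪(T ^ 3) y, y⟫_ℂ‖) := by
            rw [RCLike.norm_conj, norm_mul, norm_pow]; ring
        _ = 2 * ‖⟪(T ^ 3) y, y⟫_ℂ‖ := by rw [hv1]; ring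
        _ ≤ 2 * numRadius (T ^ 3) := by
            have := inner_le_numRadius (T ^ 3) hy
            linarith
    have hSnorm : ‖S‖ = ‖T‖ := by rw [hSdef, norm_star]
    have hMnorm : ‖M‖ ≤ ‖T‖ * (‖T ^ 2‖ + ‖S * T + T * S‖) := by
      have hid : M = T * (T * S + S * T) + S * (T * T) := by rw [hMdef]; noncomm_ring
      rw [hid]
      calc ‖T * (T * S + S * T) + S * (T * T)‖
          ≤ ‖T * (T * S + S * T)‖ + ‖S * (T * T)‖ := norm_add_le _ _
        _ ≤ ‖T‖ * ‖T * S + S * T‖ + ‖S‖ * ‖T * T‖ :=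
            add_le_add (norm_mul_le _ _) (norm_mul_le _ _)
        _ = ‖T‖ * (‖T ^ 2‖ + ‖S * T + T * S‖) := by
            rw [hSnorm, ← pow_two, add_comm (T * S) (S * T)]; ring
    have hM'norm : ‖M'‖ ≤ ‖T‖ * (‖T ^ 2‖ + ‖S * T + T * S‖) := by
      have hid : M' = S * (T * S + S * T) + T * (S * S) := by rw [hM'def]; noncomm_ring
      have hSS : ‖S * S‖ = ‖T ^ 2‖ := by
        have : (S : H →L[ℂ] H) * S = star (T * T) := by rw [hSdef, star_mul]
        rw [this, norm_star, ← pow_two]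
      rw [hid]
      calc ‖S * (T * S + S * T) + T * (S * S)‖
          ≤ ‖S * (T * S + S * T)‖ + ‖T * (S * S)‖ := norm_add_le _ _
        _ ≤ ‖S‖ * ‖T * S + S * T‖ + ‖T‖ * ‖S * S‖ :=
            add_le_add (norm_mul_le _ _) (norm_mul_le _ _)
        _ = ‖T‖ * (‖T ^ 2‖ + ‖S * T + T * S‖) := by
            rw [hSnorm, hSS, add_comm (T * S) (S * T)]; ring
    have hA3 : ‖A ^ 3‖ ≤ 2 * numRadius (T ^ 3) + 2 * (‖T‖ * (‖T ^ 2‖ + ‖S * T + T * S‖)) := by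
      rw [hexp]
      calc ‖B + u • M + v • M'‖ ≤ ‖B + u • M‖ + ‖v • M'‖ := norm_add_le _ _
        _ ≤ ‖B‖ + ‖u • M‖ + ‖v • M'‖ := by
            have := norm_add_le B (u • M)
            linarith
        _ = ‖B‖ + ‖M‖ + ‖M'‖ := by rw [norm_smul, norm_smul, hu1, hv1, one_mul, one_mul]
        _ ≤ 2 * numRadius (T ^ 3) + ‖T‖ * (‖T ^ 2‖ + ‖S * T + T * S‖)
            + ‖T‖ * (‖T ^ 2‖ + ‖S * T + T * S‖) := by
            exact add_le_add (add_le_add hBnorm hMnorm) hM'norm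
        _ = 2 * numRadius (T ^ 3) + 2 * (‖T‖ * (‖T ^ 2‖ + ‖S * T + T * S‖)) := by ring
    have h83 : (2 * ‖c‖) ^ 3 ≤ ‖A ^ 3‖ :=
      le_trans (pow_le_pow_left₀ (by positivity) h2c 3) (sa_norm_cube hAsa)
    have hcube : (2 * ‖c‖) ^ 3 = 8 * ‖c‖ ^ 3 := by ring
    nlinarith [h83, hA3]

end NumRadAux

theorem thm1 (T : H →L[ℂ] H) :
    (numRadius T) ^ 3 ≤ (1 / 4) * numRadius (T ^ 3) +
      (1 / 4) * (‖T ^ 2‖ + ‖ContinuousLinearMap.adjoint T * T + T * ContinuousLinearMap.adjoint T‖) * ‖T‖ := by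
  set R : ℝ := (1 / 4) * numRadius (T ^ 3) +
      (1 / 4) * (‖T ^ 2‖ + ‖ContinuousLinearMap.adjoint T * T + T * ContinuousLinearMap.adjoint T‖) * ‖T‖
    with hRdef
  have hR0 : 0 ≤ R := by
    rw [hRdef]
    have := NumRadAux.numRadius_nonneg (T ^ 3)
    positivity
  set D : ℝ := R ^ (((3 : ℕ) : ℝ))⁻¹ with hDdef
  have hD3 : D ^ (3 : ℕ) = R := Real.rpow_inv_natCast_pow hR0 (by norm_num)
  have hD0 : 0 ≤ D := Real.rpow_nonneg hR0 _
  have hle : numRadius T ≤ D := by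
    refine Real.sSup_le ?_ hD0
    rintro r ⟨x, hxn, rfl⟩
    have hk : ‖⟪T x, x⟫_ℂ‖ ^ 3 ≤ R := NumRadAux.key T hxn
    rw [← hD3] at hk
    exact (pow_le_pow_iff_left₀ (norm_nonneg _) hD0 (by norm_num)).mp hk
  calc numRadius T ^ 3 ≤ D ^ 3 := pow_le_pow_left₀ (NumRadAux.numRadius_nonneg T) hle 3
    _ = R := hD3
end

section
/- Let T be a bounded linear operator on a complex Hilbert space H. Then w(T)³ ≤ (1/2) w(T² T*) + (1/2) ‖T‖³. -/
open scoped InnerProductSpace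

variable {H : Type*} [NormedAddCommGroup H] [InnerProductSpace ℂ H] [CompleteSpace H]

lemma numRadius_bddAbove (T : H →L[ℂ] H) :
    BddAbove {r : ℝ | ∃ x : H, ‖x‖ = 1 ∧ r = ‖⟪T x, x⟫_ℂ‖} := by
  refine ⟨‖T‖, ?_⟩
  rintro r ⟨x, hx, rfl⟩
  calc ‖⟪T x, x⟫_ℂ‖ ≤ ‖T x‖ * ‖x‖ := norm_inner_le_norm _ _
    _ ≤ ‖T‖ * ‖x‖ * ‖x‖ := by
        have := T.le_opNorm x
        nlinarith [norm_nonneg x]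
    _ = ‖T‖ := by rw [hx]; ring

lemma numRadius_nonneg (T : H →L[ℂ] H) : 0 ≤ numRadius T := by
  apply Real.sSup_nonneg
  rintro r ⟨x, hx, rfl⟩
  exact norm_nonneg _

lemma le_numRadius (T : H →L[ℂ] H) {x : H} (hx : ‖x‖ = 1) :
    ‖⟪T x, x⟫_ℂ‖ ≤ numRadius T :=
  le_csSup (numRadius_bddAbove T) ⟨x, hx, rfl⟩

/-- Buzano's inequality. -/
lemma buzano_s5 (a b x : H) (hx : ‖x‖ = 1) :
    ‖⟪a, x⟫_ℂ * ⟪x, b⟫_ℂ‖ ≤ (‖a‖ * ‖b‖ + ‖⟪a, b⟫_ℂ‖) / 2 := by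
  set c : ℂ := ⟪x, a⟫_ℂ with hc
  set u : H := (2 * c) • x - a with hu
  have hx2 : (⟪x, x⟫_ℂ : ℂ) = 1 := by
    rw [inner_self_eq_norm_sq_to_K, hx]; norm_num
  have hnu : ‖u‖ = ‖a‖ := by
    have h : (‖u‖ : ℝ) ^ 2 = ‖a‖ ^ 2 := by
      have expand : (⟪u, u⟫_ℂ : ℂ) = ⟪a, a⟫_ℂ := by
        have hax : ⟪a, x⟫_ℂ = (starRingEnd ℂ) c := by
          rw [hc]; exact (inner_conj_symm _ _).symm
        simp only [hu, inner_sub_sub_self, inner_smul_left, inner_smul_right, hx2,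
          hax, map_mul, Complex.conj_ofNat]
        ring
      have h2 := expand
      simp only [inner_self_eq_norm_sq_to_K] at h2
      exact_mod_cast h2
    have h1 : 0 ≤ ‖u‖ := norm_nonneg _
    have h2 : 0 ≤ ‖a‖ := norm_nonneg _
    nlinarith
  have key : 2 * (⟪a, x⟫_ℂ * ⟪x, b⟫_ℂ) = ⟪u, b⟫_ℂ + ⟪a, b⟫_ℂ := by
    have hax : ⟪a, x⟫_ℂ = (starRingEnd ℂ) c := by
      rw [hc]; exact (inner_conj_symm _ _).symm
    simp only [hu, inner_sub_left, inner_smul_left, hax, map_mul, Complex.conj_ofNat]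
    ring
  have h2 : ‖2 * (⟪a, x⟫_ℂ * ⟪x, b⟫_ℂ)‖ ≤ ‖a‖ * ‖b‖ + ‖⟪a, b⟫_ℂ‖ := by
    rw [key]
    calc ‖⟪u, b⟫_ℂ + ⟪a, b⟫_ℂ‖ ≤ ‖⟪u, b⟫_ℂ‖ + ‖⟪a, b⟫_ℂ‖ := norm_add_le _ _
      _ ≤ ‖u‖ * ‖b‖ + ‖⟪a, b⟫_ℂ‖ := by gcongr; exact norm_inner_le_norm _ _
      _ = ‖a‖ * ‖b‖ + ‖⟪a, b⟫_ℂ‖ := by rw [hnu]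
  rw [norm_mul] at h2
  have : ‖(2 : ℂ)‖ = 2 := by norm_num
  rw [this] at h2
  linarith

theorem eqn6 (T : H →L[ℂ] H) :
    (numRadius T) ^ 3 ≤ (1 / 2) * numRadius (T ^ 2 * ContinuousLinearMap.adjoint T) + (1 / 2) * ‖T‖ ^ 3 := by
  set S := T ^ 2 * ContinuousLinearMap.adjoint T with hS
  set c : ℝ := (1 / 2) * numRadius S + (1 / 2) * ‖T‖ ^ 3 with hcdef
  have hcnn : 0 ≤ c := by
    have := numRadius_nonneg S
    have h2 : (0:ℝ) ≤ ‖T‖ ^ 3 := by positivity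
    rw [hcdef]; linarith
  have hTs : ‖ContinuousLinearMap.adjoint T‖ = ‖T‖ :=
    LinearIsometryEquiv.norm_map ContinuousLinearMap.adjoint T
  -- pointwise bound
  have pointwise : ∀ x : H, ‖x‖ = 1 → ‖⟪T x, x⟫_ℂ‖ ^ 3 ≤ c := by
    intro x hx
    set Ts := ContinuousLinearMap.adjoint T
    have h1 : ‖⟪T x, x⟫_ℂ‖ ≤ ‖Ts x‖ := by
      have : ⟪T x, x⟫_ℂ = ⟪x, Ts x⟫_ℂ :=
        (ContinuousLinearMap.adjoint_inner_right T x x).symm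
      rw [this]
      calc ‖⟪x, Ts x⟫_ℂ‖ ≤ ‖x‖ * ‖Ts x‖ := norm_inner_le_norm _ _
        _ = ‖Ts x‖ := by rw [hx, one_mul]
    have hbuz := buzano_s5 (T (Ts x)) (Ts x) x hx
    have hA : ⟪T (Ts x), x⟫_ℂ = ⟪Ts x, Ts x⟫_ℂ :=
      (ContinuousLinearMap.adjoint_inner_right T (Ts x) x).symm
    have hB : ⟪x, Ts x⟫_ℂ = ⟪T x, x⟫_ℂ :=
      ContinuousLinearMap.adjoint_inner_right T x x
    have hSx : ⟪S x, x⟫_ℂ = ⟪T (Ts x), Ts x⟫_ℂ := by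
      have : S x = T (T (Ts x)) := by
        simp [hS, ContinuousLinearMap.mul_apply, pow_two]
      rw [this]
      exact (ContinuousLinearMap.adjoint_inner_right T (T (Ts x)) x).symm
    -- rewrite buzano
    rw [hA, hB, norm_mul] at hbuz
    have hself : ‖(⟪Ts x, Ts x⟫_ℂ : ℂ)‖ = ‖Ts x‖ ^ 2 := by
      rw [inner_self_eq_norm_sq_to_K, norm_pow]
      norm_num
    rw [hself] at hbuz
    -- norms bounds
    have hTsx : ‖Ts x‖ ≤ ‖T‖ := by
      calc ‖Ts x‖ ≤ ‖Ts‖ * ‖x‖ := Ts.le_opNorm x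
        _ = ‖T‖ := by rw [hTs, hx, mul_one]
    have hTTsx : ‖T (Ts x)‖ ≤ ‖T‖ ^ 2 := by
      calc ‖T (Ts x)‖ ≤ ‖T‖ * ‖Ts x‖ := T.le_opNorm _
        _ ≤ ‖T‖ * ‖T‖ := by gcongr
        _ = ‖T‖ ^ 2 := (sq ‖T‖).symm
    have hw : ‖⟪T (Ts x), Ts x⟫_ℂ‖ ≤ numRadius S := by
      rw [← hSx]; exact le_numRadius S hx
    have hTnn : (0:ℝ) ≤ ‖T‖ := norm_nonneg _
    have hTxnn : (0:ℝ) ≤ ‖⟪T x, x⟫_ℂ‖ := norm_nonneg _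
    have hTsxnn : (0:ℝ) ≤ ‖Ts x‖ := norm_nonneg _
    have step1 : ‖⟪T x, x⟫_ℂ‖ ^ 3 ≤ ‖Ts x‖ ^ 2 * ‖⟪T x, x⟫_ℂ‖ := by
      have : ‖⟪T x, x⟫_ℂ‖ ^ 2 ≤ ‖Ts x‖ ^ 2 := by nlinarith
      nlinarith
    have prodbound : ‖T (Ts x)‖ * ‖Ts x‖ ≤ ‖T‖ ^ 3 := by nlinarith [norm_nonneg (T (Ts x))]
    calc ‖⟪T x, x⟫_ℂ‖ ^ 3 ≤ ‖Ts x‖ ^ 2 * ‖⟪T x, x⟫_ℂ‖ := step1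
      _ ≤ (‖T (Ts x)‖ * ‖Ts x‖ + ‖⟪T (Ts x), Ts x⟫_ℂ‖) / 2 := hbuz
      _ ≤ (‖T‖ ^ 3 + numRadius S) / 2 := by gcongr
      _ = c := by rw [hcdef]; ring
  -- conclude via cube roots
  have hc3 : (c ^ ((3:ℕ):ℝ)⁻¹) ^ (3:ℕ) = c := Real.rpow_inv_natCast_pow hcnn (by norm_num)
  have hub : numRadius T ≤ c ^ ((3:ℕ):ℝ)⁻¹ := by
    apply Real.sSup_le
    · rintro r ⟨x, hx, rfl⟩
      have hp := pointwise x hx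
      have hrnn : (0:ℝ) ≤ ‖⟪T x, x⟫_ℂ‖ := norm_nonneg _
      have : ‖⟪T x, x⟫_ℂ‖ = (‖⟪T x, x⟫_ℂ‖ ^ (3:ℕ)) ^ ((3:ℕ):ℝ)⁻¹ :=
        (Real.pow_rpow_inv_natCast hrnn (by norm_num)).symm
      rw [this]
      exact Real.rpow_le_rpow (by positivity) hp (by positivity)
    · positivity
  calc (numRadius T) ^ 3 ≤ (c ^ ((3:ℕ):ℝ)⁻¹) ^ (3:ℕ) := by
        gcongr
        exact numRadius_nonneg T
    _ = c := hc3
end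

section
/- Let T be a bounded linear operator on a complex Hilbert space H with w(T) = ‖T‖. Then w(TT*T) = w(T²T*) = w(T*T²) = ‖T‖³. -/
set_option linter.unusedSectionVars false

open scoped InnerProductSpace

variable {H : Type*} [NormedAddCommGroup H] [InnerProductSpace ℂ H] [CompleteSpace H]

namespace Coor2Aux

open ContinuousLinearMap

lemma sub_smul_sq {x y : H} {c : ℂ} (hx : ‖x‖ = 1) (h : ⟪y, x⟫_ℂ = starRingEnd ℂ c) :
    ‖y - c • x‖ ^ 2 = ‖y‖ ^ 2 - ‖c‖ ^ 2 := by
  rw [@norm_sub_sq ℂ, inner_smul_right, h, Complex.mul_conj']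
  simp [norm_smul, hx, Complex.normSq_eq_norm_sq, ← Complex.ofReal_pow]
  ring

lemma mem_le (S : H →L[ℂ] H) {r : ℝ} (hr : r ∈ {r : ℝ | ∃ x : H, ‖x‖ = 1 ∧ r = ‖⟪S x, x⟫_ℂ‖}) :
    r ≤ ‖S‖ := by
  obtain ⟨x, hx, rfl⟩ := hr
  calc ‖⟪S x, x⟫_ℂ‖ ≤ ‖S x‖ * ‖x‖ := norm_inner_le_norm _ _
    _ ≤ ‖S‖ * ‖x‖ * ‖x‖ := by
        have := S.le_opNorm x
        nlinarith [norm_nonneg x]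
    _ = ‖S‖ := by rw [hx]; ring

lemma bdd (S : H →L[ℂ] H) : BddAbove {r : ℝ | ∃ x : H, ‖x‖ = 1 ∧ r = ‖⟪S x, x⟫_ℂ‖} :=
  ⟨‖S‖, fun _ hr => mem_le S hr⟩

lemma numRadius_le (S : H →L[ℂ] H) : numRadius S ≤ ‖S‖ :=
  Real.sSup_le (fun _ hr => mem_le S hr) (norm_nonneg S)

lemma le_numRadius (S : H →L[ℂ] H) {x : H} (hx : ‖x‖ = 1) :
    ‖⟪S x, x⟫_ℂ‖ ≤ numRadius S :=
  le_csSup (bdd S) ⟨x, hx, rfl⟩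

/-- Generic lower bound: if `S x` is close to `c • x` with `‖c‖ = ‖a‖³`,
then `|⟪S x, x⟫|` is at least `‖a‖³` minus the error. -/
lemma inner_lower (S : H →L[ℂ] H) {x : H} (hx : ‖x‖ = 1) (c : ℂ) :
    ‖c‖ - ‖S x - c • x‖ ≤ ‖⟪S x, x⟫_ℂ‖ := by
  have h1 : ⟪S x, x⟫_ℂ = ⟪(c : ℂ) • x, x⟫_ℂ + ⟪S x - c • x, x⟫_ℂ := by
    rw [← inner_add_left, add_sub_cancel]
  have h2 : ‖⟪(c : ℂ) • x, x⟫_ℂ‖ = ‖c‖ := by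
    rw [inner_smul_left]
    simp [@inner_self_eq_norm_sq_to_K ℂ, hx]
  have h3 : ‖⟪S x - c • x, x⟫_ℂ‖ ≤ ‖S x - c • x‖ := by
    calc ‖⟪S x - c • x, x⟫_ℂ‖ ≤ ‖S x - c • x‖ * ‖x‖ := norm_inner_le_norm _ _
      _ = ‖S x - c • x‖ := by rw [hx, mul_one]
  calc ‖c‖ - ‖S x - c • x‖ ≤ ‖⟪(c : ℂ) • x, x⟫_ℂ‖ - ‖⟪S x - c • x, x⟫_ℂ‖ := by
        rw [h2]; linarith
    _ ≤ ‖⟪S x, x⟫_ℂ‖ := by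
        rw [h1]
        have h4 := norm_sub_le (⟪(c:ℂ) • x, x⟫_ℂ + ⟪S x - c • x, x⟫_ℂ) (⟪S x - c • x, x⟫_ℂ)
        simp only [add_sub_cancel_right] at h4
        linarith

/-- key estimate data at a unit vector x -/
lemma key_est (T : H →L[ℂ] H) {x : H} (hx : ‖x‖ = 1) :
    ‖T x - (starRingEnd ℂ ⟪T x, x⟫_ℂ) • x‖ ≤ Real.sqrt (‖T‖ ^ 2 - ‖⟪T x, x⟫_ℂ‖ ^ 2) ∧
    ‖adjoint T x - (⟪T x, x⟫_ℂ) • x‖ ≤ Real.sqrt (‖T‖ ^ 2 - ‖⟪T x, x⟫_ℂ‖ ^ 2) := by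
  set a := ⟪T x, x⟫_ℂ with ha
  have hTx : ‖T x‖ ≤ ‖T‖ := by simpa [hx] using T.le_opNorm x
  have hT'x : ‖adjoint T x‖ ≤ ‖T‖ := by
    have := (adjoint T).le_opNorm x
    rwa [ContinuousLinearMap.adjoint.norm_map T, hx, mul_one] at this
  constructor
  · apply Real.le_sqrt_of_sq_le
    have h1 : ⟪T x, x⟫_ℂ = starRingEnd ℂ (starRingEnd ℂ a) := by simp [ha]
    rw [sub_smul_sq hx h1]
    have : ‖starRingEnd ℂ a‖ = ‖a‖ := RCLike.norm_conj a
    rw [this]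
    nlinarith [norm_nonneg (T x)]
  · apply Real.le_sqrt_of_sq_le
    have h1 : ⟪adjoint T x, x⟫_ℂ = starRingEnd ℂ a := by
      rw [ContinuousLinearMap.adjoint_inner_left]
      rw [← @inner_conj_symm ℂ]
    rw [sub_smul_sq hx h1]
    nlinarith [norm_nonneg (adjoint T x)]

lemma abs_cube (a : ℂ) : ‖a * starRingEnd ℂ a * starRingEnd ℂ a‖ = ‖a‖ ^ 3 := by
  simp [norm_mul]; ring

lemma abs_cube' (a : ℂ) : ‖starRingEnd ℂ a * starRingEnd ℂ a * a‖ = ‖a‖ ^ 3 := by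
  simp [norm_mul]; ring

section lowers
variable (T : H →L[ℂ] H) {x : H}

/-- The main per-vector lower bound, common shape. -/
lemma common (S : H →L[ℂ] H) (hx : ‖x‖ = 1) (c : ℂ) (hc : ‖c‖ = ‖⟪T x, x⟫_ℂ‖ ^ 3)
    (herr : ‖S x - c • x‖ ≤ 3 * ‖T‖ ^ 2 * Real.sqrt (‖T‖ ^ 2 - ‖⟪T x, x⟫_ℂ‖ ^ 2)) :
    ‖⟪T x, x⟫_ℂ‖ ^ 3 - 3 * ‖T‖ ^ 2 * Real.sqrt (‖T‖ ^ 2 - ‖⟪T x, x⟫_ℂ‖ ^ 2)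
      ≤ ‖⟪S x, x⟫_ℂ‖ := by
  have := inner_lower S hx c
  rw [hc] at this
  linarith

lemma lower1 (hx : ‖x‖ = 1) :
    ‖⟪T x, x⟫_ℂ‖ ^ 3 - 3 * ‖T‖ ^ 2 * Real.sqrt (‖T‖ ^ 2 - ‖⟪T x, x⟫_ℂ‖ ^ 2)
      ≤ ‖⟪(T * adjoint T * T) x, x⟫_ℂ‖ := by
  set a := ⟪T x, x⟫_ℂ with ha
  set s := Real.sqrt (‖T‖ ^ 2 - ‖a‖ ^ 2) with hsdef
  obtain ⟨he1, he2⟩ := key_est T hx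
  rw [← ha, ← hsdef] at he1 he2
  have haM : ‖a‖ ≤ ‖T‖ := mem_le T ⟨x, hx, rfl⟩
  have hs0 : 0 ≤ s := Real.sqrt_nonneg _
  apply common T _ hx (a * starRingEnd ℂ a * starRingEnd ℂ a) (abs_cube a)
  have hid : (T * adjoint T * T) x - (a * starRingEnd ℂ a * starRingEnd ℂ a) • x
      = (a * starRingEnd ℂ a) • (T x - starRingEnd ℂ a • x)
        + starRingEnd ℂ a • T (adjoint T x - a • x)
        + T (adjoint T (T x - starRingEnd ℂ a • x)) := by
    simp only [ContinuousLinearMap.mul_apply, map_sub, map_smul]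
    module
  rw [hid]
  have b1 : ‖(a * starRingEnd ℂ a) • (T x - starRingEnd ℂ a • x)‖ ≤ ‖T‖ ^ 2 * s := by
    rw [norm_smul, norm_mul, RCLike.norm_conj]
    calc ‖a‖ * ‖a‖ * ‖T x - starRingEnd ℂ a • x‖ ≤ ‖T‖ * ‖T‖ * s := by
          refine mul_le_mul (mul_le_mul haM haM (norm_nonneg a) (norm_nonneg T)) ?_
            (norm_nonneg _) (by positivity)
          assumption
      _ = ‖T‖ ^ 2 * s := by ring
  have b2 : ‖starRingEnd ℂ a • T (adjoint T x - a • x)‖ ≤ ‖T‖ ^ 2 * s := by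
    rw [norm_smul, RCLike.norm_conj]
    have hTe : ‖T (adjoint T x - a • x)‖ ≤ ‖T‖ * s :=
      le_trans (T.le_opNorm _) (mul_le_mul_of_nonneg_left he2 (norm_nonneg T))
    calc ‖a‖ * ‖T (adjoint T x - a • x)‖ ≤ ‖T‖ * (‖T‖ * s) :=
          mul_le_mul haM hTe (norm_nonneg _) (norm_nonneg T)
      _ = ‖T‖ ^ 2 * s := by ring
  have b3 : ‖T (adjoint T (T x - starRingEnd ℂ a • x))‖ ≤ ‖T‖ ^ 2 * s := by
    have h1 := T.le_opNorm (adjoint T (T x - starRingEnd ℂ a • x))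
    have h2 := (adjoint T).le_opNorm (T x - starRingEnd ℂ a • x)
    rw [ContinuousLinearMap.adjoint.norm_map T] at h2
    nlinarith [norm_nonneg (adjoint T (T x - starRingEnd ℂ a • x)), norm_nonneg T]
  calc ‖_ + _ + _‖ ≤ ‖(a * starRingEnd ℂ a) • (T x - starRingEnd ℂ a • x)‖
        + ‖starRingEnd ℂ a • T (adjoint T x - a • x)‖
        + ‖T (adjoint T (T x - starRingEnd ℂ a • x))‖ := norm_add₃_le
    _ ≤ 3 * ‖T‖ ^ 2 * s := by linarith

lemma lower2 (hx : ‖x‖ = 1) :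
    ‖⟪T x, x⟫_ℂ‖ ^ 3 - 3 * ‖T‖ ^ 2 * Real.sqrt (‖T‖ ^ 2 - ‖⟪T x, x⟫_ℂ‖ ^ 2)
      ≤ ‖⟪(T ^ 2 * adjoint T) x, x⟫_ℂ‖ := by
  set a := ⟪T x, x⟫_ℂ with ha
  set s := Real.sqrt (‖T‖ ^ 2 - ‖a‖ ^ 2) with hsdef
  obtain ⟨he1, he2⟩ := key_est T hx
  rw [← ha, ← hsdef] at he1 he2
  have haM : ‖a‖ ≤ ‖T‖ := mem_le T ⟨x, hx, rfl⟩
  have hs0 : 0 ≤ s := Real.sqrt_nonneg _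
  apply common T _ hx (a * starRingEnd ℂ a * starRingEnd ℂ a) (abs_cube a)
  have hid : (T ^ 2 * adjoint T) x - (a * starRingEnd ℂ a * starRingEnd ℂ a) • x
      = (a * starRingEnd ℂ a) • (T x - starRingEnd ℂ a • x)
        + a • T (T x - starRingEnd ℂ a • x)
        + T (T (adjoint T x - a • x)) := by
    simp only [pow_two, ContinuousLinearMap.mul_apply, map_sub, map_smul]
    module
  rw [hid]
  have b1 : ‖(a * starRingEnd ℂ a) • (T x - starRingEnd ℂ a • x)‖ ≤ ‖T‖ ^ 2 * s := by
    rw [norm_smul, norm_mul, RCLike.norm_conj]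
    calc ‖a‖ * ‖a‖ * ‖T x - starRingEnd ℂ a • x‖ ≤ ‖T‖ * ‖T‖ * s := by
          refine mul_le_mul (mul_le_mul haM haM (norm_nonneg a) (norm_nonneg T)) ?_
            (norm_nonneg _) (by positivity)
          assumption
      _ = ‖T‖ ^ 2 * s := by ring
  have b2 : ‖a • T (T x - starRingEnd ℂ a • x)‖ ≤ ‖T‖ ^ 2 * s := by
    rw [norm_smul]
    have hTe : ‖T (T x - starRingEnd ℂ a • x)‖ ≤ ‖T‖ * s :=
      le_trans (T.le_opNorm _) (mul_le_mul_of_nonneg_left he1 (norm_nonneg T))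
    calc ‖a‖ * ‖T (T x - starRingEnd ℂ a • x)‖ ≤ ‖T‖ * (‖T‖ * s) :=
          mul_le_mul haM hTe (norm_nonneg _) (norm_nonneg T)
      _ = ‖T‖ ^ 2 * s := by ring
  have b3 : ‖T (T (adjoint T x - a • x))‖ ≤ ‖T‖ ^ 2 * s := by
    have h1 := T.le_opNorm (T (adjoint T x - a • x))
    have h2 := T.le_opNorm (adjoint T x - a • x)
    nlinarith [norm_nonneg (T (adjoint T x - a • x)), norm_nonneg T]
  calc ‖_ + _ + _‖ ≤ ‖(a * starRingEnd ℂ a) • (T x - starRingEnd ℂ a • x)‖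
        + ‖a • T (T x - starRingEnd ℂ a • x)‖
        + ‖T (T (adjoint T x - a • x))‖ := norm_add₃_le
    _ ≤ 3 * ‖T‖ ^ 2 * s := by linarith

lemma lower3 (hx : ‖x‖ = 1) :
    ‖⟪T x, x⟫_ℂ‖ ^ 3 - 3 * ‖T‖ ^ 2 * Real.sqrt (‖T‖ ^ 2 - ‖⟪T x, x⟫_ℂ‖ ^ 2)
      ≤ ‖⟪(adjoint T * T ^ 2) x, x⟫_ℂ‖ := by
  set a := ⟪T x, x⟫_ℂ with ha
  set s := Real.sqrt (‖T‖ ^ 2 - ‖a‖ ^ 2) with hsdef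
  obtain ⟨he1, he2⟩ := key_est T hx
  rw [← ha, ← hsdef] at he1 he2
  have haM : ‖a‖ ≤ ‖T‖ := mem_le T ⟨x, hx, rfl⟩
  have hs0 : 0 ≤ s := Real.sqrt_nonneg _
  apply common T _ hx (starRingEnd ℂ a * starRingEnd ℂ a * a) (abs_cube' a)
  have hid : (adjoint T * T ^ 2) x - (starRingEnd ℂ a * starRingEnd ℂ a * a) • x
      = (starRingEnd ℂ a * starRingEnd ℂ a) • (adjoint T x - a • x)
        + starRingEnd ℂ a • adjoint T (T x - starRingEnd ℂ a • x)
        + adjoint T (T (T x - starRingEnd ℂ a • x)) := by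
    simp only [pow_two, ContinuousLinearMap.mul_apply, map_sub, map_smul]
    module
  rw [hid]
  have b1 : ‖(starRingEnd ℂ a * starRingEnd ℂ a) • (adjoint T x - a • x)‖ ≤ ‖T‖ ^ 2 * s := by
    rw [norm_smul, norm_mul, RCLike.norm_conj]
    calc ‖a‖ * ‖a‖ * ‖adjoint T x - a • x‖ ≤ ‖T‖ * ‖T‖ * s := by
          refine mul_le_mul (mul_le_mul haM haM (norm_nonneg a) (norm_nonneg T)) ?_
            (norm_nonneg _) (by positivity)
          assumption
      _ = ‖T‖ ^ 2 * s := by ring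
  have b2 : ‖starRingEnd ℂ a • adjoint T (T x - starRingEnd ℂ a • x)‖ ≤ ‖T‖ ^ 2 * s := by
    rw [norm_smul, RCLike.norm_conj]
    have h2 := (adjoint T).le_opNorm (T x - starRingEnd ℂ a • x)
    rw [ContinuousLinearMap.adjoint.norm_map T] at h2
    have hTe : ‖adjoint T (T x - starRingEnd ℂ a • x)‖ ≤ ‖T‖ * s :=
      le_trans h2 (mul_le_mul_of_nonneg_left he1 (norm_nonneg T))
    calc ‖a‖ * ‖adjoint T (T x - starRingEnd ℂ a • x)‖ ≤ ‖T‖ * (‖T‖ * s) :=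
          mul_le_mul haM hTe (norm_nonneg _) (norm_nonneg T)
      _ = ‖T‖ ^ 2 * s := by ring
  have b3 : ‖adjoint T (T (T x - starRingEnd ℂ a • x))‖ ≤ ‖T‖ ^ 2 * s := by
    have h1 := (adjoint T).le_opNorm (T (T x - starRingEnd ℂ a • x))
    rw [ContinuousLinearMap.adjoint.norm_map T] at h1
    have h2 := T.le_opNorm (T x - starRingEnd ℂ a • x)
    nlinarith [norm_nonneg (T (T x - starRingEnd ℂ a • x)), norm_nonneg T]
  calc ‖_ + _ + _‖ ≤ ‖(starRingEnd ℂ a * starRingEnd ℂ a) • (adjoint T x - a • x)‖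
        + ‖starRingEnd ℂ a • adjoint T (T x - starRingEnd ℂ a • x)‖
        + ‖adjoint T (T (T x - starRingEnd ℂ a • x))‖ := norm_add₃_le
    _ ≤ 3 * ‖T‖ ^ 2 * s := by linarith

end lowers

lemma final (T S : H →L[ℂ] H) (h : numRadius T = ‖T‖) (hS : ‖S‖ ≤ ‖T‖ ^ 3)
    (hlow : ∀ x : H, ‖x‖ = 1 →
      ‖⟪T x, x⟫_ℂ‖ ^ 3 - 3 * ‖T‖ ^ 2 * Real.sqrt (‖T‖ ^ 2 - ‖⟪T x, x⟫_ℂ‖ ^ 2)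
        ≤ ‖⟪S x, x⟫_ℂ‖) :
    numRadius S = ‖T‖ ^ 3 := by
  rcases eq_or_lt_of_le (norm_nonneg T) with hM | hM
  · -- ‖T‖ = 0
    have hT0 : ‖T‖ = 0 := hM.symm
    have hS0 : S = 0 := by
      have h1 : ‖S‖ ≤ 0 := by rw [hT0] at hS; simpa using hS
      exact norm_le_zero_iff.mp h1
    subst hS0
    rw [hT0]
    have hsub : {r : ℝ | ∃ x : H, ‖x‖ = 1 ∧ r = ‖⟪(0 : H →L[ℂ] H) x, x⟫_ℂ‖} ⊆ {0} := by
      rintro r ⟨x, hx, rfl⟩; simp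
    unfold numRadius
    rcases Set.subset_singleton_iff_eq.mp hsub with h0 | h0
    · rw [h0]; simp [Real.sSup_empty]
    · rw [h0]; simp
  · apply le_antisymm ((numRadius_le S).trans hS)
    apply le_of_forall_pos_le_add
    intro η hη
    set M := ‖T‖ with hMdef
    set D := η / (6 * M ^ 2) with hDdef
    have hM2 : (0:ℝ) < M ^ 2 := by positivity
    have hD : 0 < D := by positivity
    set ε := min D (D ^ 2 / (2 * M)) with hεdef
    have hεpos : 0 < ε := lt_min hD (by positivity)
    have hne : {r : ℝ | ∃ x : H, ‖x‖ = 1 ∧ r = ‖⟪T x, x⟫_ℂ‖}.Nonempty := by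
      by_contra hc
      rw [Set.not_nonempty_iff_eq_empty] at hc
      have h1 : numRadius T = 0 := by unfold numRadius; rw [hc]; exact Real.sSup_empty
      rw [h] at h1; linarith
    have hlt : M - ε < sSup {r : ℝ | ∃ x : H, ‖x‖ = 1 ∧ r = ‖⟪T x, x⟫_ℂ‖} := by
      have : numRadius T = sSup {r : ℝ | ∃ x : H, ‖x‖ = 1 ∧ r = ‖⟪T x, x⟫_ℂ‖} := rfl
      rw [← this, h]; linarith
    obtain ⟨r, hrmem, hr⟩ := exists_lt_of_lt_csSup hne hlt
    obtain ⟨x, hx, rfl⟩ := hrmem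
    have hrM : ‖⟪T x, x⟫_ℂ‖ ≤ M := mem_le T ⟨x, hx, rfl⟩
    set r := ‖⟪T x, x⟫_ℂ‖ with hrdef
    have hr0 : (0:ℝ) ≤ r := norm_nonneg _
    have key := (hlow x hx).trans (le_numRadius S hx)
    rw [← hrdef] at key
    have h1 : M - r ≤ ε := by linarith
    have hDη : D * (6 * M ^ 2) = η := by
      rw [hDdef]; field_simp
    have hsq : Real.sqrt (M ^ 2 - r ^ 2) ≤ D := by
      rw [Real.sqrt_le_left hD.le]
      have h2 : ε * (2 * M) ≤ D ^ 2 :=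
        (le_div_iff₀ (by positivity)).mp (min_le_right _ _)
      nlinarith [mul_le_mul h1 (show M + r ≤ 2 * M by linarith) (by linarith) hεpos.le]
    have h3 : M ^ 3 - r ^ 3 ≤ η / 2 := by
      have h2 : ε ≤ D := min_le_left _ _
      nlinarith [mul_le_mul (h1.trans h2)
        (show M ^ 2 + M * r + r ^ 2 ≤ 3 * M ^ 2 by nlinarith)
        (by nlinarith) hD.le]
    have h4 : 3 * M ^ 2 * Real.sqrt (M ^ 2 - r ^ 2) ≤ η / 2 := by
      nlinarith [Real.sqrt_nonneg (M ^ 2 - r ^ 2)]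
    linarith

end Coor2Aux

theorem coor2 (T : H →L[ℂ] H) (h : numRadius T = ‖T‖) :
    numRadius (T * ContinuousLinearMap.adjoint T * T) = ‖T‖ ^ 3 ∧
    numRadius (T ^ 2 * ContinuousLinearMap.adjoint T) = ‖T‖ ^ 3 ∧
    numRadius (ContinuousLinearMap.adjoint T * T ^ 2) = ‖T‖ ^ 3 := by
  open ContinuousLinearMap Coor2Aux in
  have hadj : ‖adjoint T‖ = ‖T‖ := ContinuousLinearMap.adjoint.norm_map T
  have hsq : ‖T ^ 2‖ ≤ ‖T‖ ^ 2 := by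
    rw [pow_two, pow_two]; exact norm_mul_le T T
  refine ⟨Coor2Aux.final T _ h ?_ (fun x hx => Coor2Aux.lower1 T hx),
    Coor2Aux.final T _ h ?_ (fun x hx => Coor2Aux.lower2 T hx),
    Coor2Aux.final T _ h ?_ (fun x hx => Coor2Aux.lower3 T hx)⟩
  · calc ‖T * ContinuousLinearMap.adjoint T * T‖
        ≤ ‖T * ContinuousLinearMap.adjoint T‖ * ‖T‖ := norm_mul_le _ _
      _ ≤ ‖T‖ * ‖ContinuousLinearMap.adjoint T‖ * ‖T‖ := by
          have := norm_mul_le T (ContinuousLinearMap.adjoint T)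
          nlinarith [norm_nonneg T]
      _ = ‖T‖ ^ 3 := by rw [hadj]; ring
  · calc ‖T ^ 2 * ContinuousLinearMap.adjoint T‖
        ≤ ‖T ^ 2‖ * ‖ContinuousLinearMap.adjoint T‖ := norm_mul_le _ _
      _ ≤ ‖T‖ ^ 3 := by rw [hadj]; nlinarith [norm_nonneg T]
  · calc ‖ContinuousLinearMap.adjoint T * T ^ 2‖
        ≤ ‖ContinuousLinearMap.adjoint T‖ * ‖T ^ 2‖ := norm_mul_le _ _
      _ ≤ ‖T‖ ^ 3 := by rw [hadj]; nlinarith [norm_nonneg T]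
end

section
/- Let T be a bounded linear operator on a complex Hilbert space H, let n ≥ 2 be an integer, and let x ∈ H with ‖x‖ = 1. Then |⟨Tx, x⟩|ⁿ ≤ (1/2^{n-1}) |⟨Tⁿx, x⟩| + ∑_{k=1}^{n-1} (1/2^k) ‖Tᵏx‖ ‖T*x‖^{n-k}. -/
/-!
Buzano's inequality `2 |⟪a, e⟫ ⟪e, b⟫| ≤ ‖a‖ ‖b‖ + |⟪a, b⟫|` for a unit vector `e`, applied with
`a = Tᵏ x`, `b = T* x`, `e = x`, gives
`|⟪Tᵏ x, x⟫| |⟪T x, x⟫| ≤ (‖Tᵏ x‖ ‖T* x‖ + |⟪Tᵏ⁺¹ x, x⟫|) / 2`.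
Multiplying the bound for `|⟪T x, x⟫|ⁿ` by `|⟪T x, x⟫| ≤ ‖T* x‖` and using this estimate on its
leading term gives the bound for the exponent `n + 1`.
-/

open scoped InnerProductSpace

variable {H : Type*} [NormedAddCommGroup H] [InnerProductSpace ℂ H] [CompleteSpace H]

section InnerProduct

variable {𝕜 E : Type*} [RCLike 𝕜] [NormedAddCommGroup E] [InnerProductSpace 𝕜 E]

theorem two_mul_norm_inner_mul_inner_le (a b e : E) (he : ‖e‖ = 1) :
    2 * ‖⟪a, e⟫_𝕜 * ⟪e, b⟫_𝕜‖ ≤ ‖a‖ * ‖b‖ + ‖⟪a, b⟫_𝕜‖ := by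
  -- `u` is the reflection of `b` in the line `𝕜 e`, so it has the norm of `b`.
  set u : E := (2 * ⟪e, b⟫_𝕜) • e - b
  have hu : ‖u‖ = ‖b‖ := by
    have : ‖u‖ ^ 2 = ‖b‖ ^ 2 := by
      rw [norm_sub_sq (𝕜 := 𝕜), norm_smul, he, inner_smul_left, map_mul (starRingEnd 𝕜),
        mul_assoc, RCLike.conj_mul, map_ofNat, RCLike.ofNat_mul_re, ← RCLike.ofReal_pow,
        RCLike.ofReal_re, norm_mul, RCLike.norm_ofNat, mul_one]
      ring
    exact (sq_eq_sq₀ (norm_nonneg _) (norm_nonneg _)).1 this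
  calc 2 * ‖⟪a, e⟫_𝕜 * ⟪e, b⟫_𝕜‖ = ‖⟪a, u⟫_𝕜 + ⟪a, b⟫_𝕜‖ := by
        simp only [u, inner_sub_right, inner_smul_right, sub_add_cancel, norm_mul,
          RCLike.norm_ofNat]
        ring
    _ ≤ ‖a‖ * ‖u‖ + ‖⟪a, b⟫_𝕜‖ := (norm_add_le _ _).trans (by gcongr; exact norm_inner_le_norm a u)
    _ = ‖a‖ * ‖b‖ + ‖⟪a, b⟫_𝕜‖ := by rw [hu]

theorem norm_inner_pow_apply_mul_le [CompleteSpace E] (T : E →L[𝕜] E) {x : E} (hx : ‖x‖ = 1)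
    (k : ℕ) :
    ‖⟪(T ^ k) x, x⟫_𝕜‖ * ‖⟪T x, x⟫_𝕜‖ ≤
      (1 / 2) * (‖(T ^ k) x‖ * ‖(ContinuousLinearMap.adjoint T) x‖ + ‖⟪(T ^ (k + 1)) x, x⟫_𝕜‖) := by
  have h := two_mul_norm_inner_mul_inner_le (𝕜 := 𝕜) ((T ^ k) x)
    (ContinuousLinearMap.adjoint T x) x hx
  rw [ContinuousLinearMap.adjoint_inner_right, ContinuousLinearMap.adjoint_inner_right, norm_mul,
    ← mul_apply_eq_comp, ← pow_succ'] at h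
  linarith

theorem norm_inner_apply_le_norm_adjoint_apply [CompleteSpace E] (T : E →L[𝕜] E) {x : E}
    (hx : ‖x‖ = 1) :
    ‖⟪T x, x⟫_𝕜‖ ≤ ‖(ContinuousLinearMap.adjoint T) x‖ := by
  simpa [hx, ContinuousLinearMap.adjoint_inner_right] using
    norm_inner_le_norm (𝕜 := 𝕜) x (ContinuousLinearMap.adjoint T x)

end InnerProduct

open Finset in
theorem pow_succ_le_of_mul_le_half {α β : ℝ} {a b : ℕ → ℝ} (hα : 0 ≤ α) (hαβ : α ≤ β)
    (hb : ∀ k, 0 ≤ b k) (ha : α ≤ a 1) (hstep : ∀ k, a k * α ≤ (1 / 2) * (b k * β + a (k + 1)))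
    (m : ℕ) :
    α ^ (m + 1) ≤ (1 / 2 ^ m) * a (m + 1) + ∑ k ∈ Icc 1 m, (1 / 2 ^ k) * b k * β ^ (m + 1 - k) := by
  have hβ : 0 ≤ β := hα.trans hαβ
  induction m with
  | zero => simpa using ha
  | succ m ih =>
    have hlast : (1 / 2 ^ m) * a (m + 1) * α ≤
        (1 / 2 ^ (m + 1)) * a (m + 2) + (1 / 2 ^ (m + 1)) * b (m + 1) * β ^ (m + 2 - (m + 1)) := by
      calc (1 / 2 ^ m) * a (m + 1) * α = (1 / 2 ^ m) * (a (m + 1) * α) := mul_assoc _ _ _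
        _ ≤ (1 / 2 ^ m) * ((1 / 2) * (b (m + 1) * β + a (m + 2))) :=
          mul_le_mul_of_nonneg_left (hstep _) (by positivity)
        _ = _ := by rw [show m + 2 - (m + 1) = 1 by omega, pow_one, pow_succ]; ring
    have hsum : ∀ k ∈ Icc 1 m, (1 / 2 ^ k) * b k * β ^ (m + 1 - k) * α ≤
        (1 / 2 ^ k) * b k * β ^ (m + 2 - k) := by
      intro k hk
      rw [show m + 2 - k = m + 1 - k + 1 by grind, pow_succ, ← mul_assoc]
      exact mul_le_mul_of_nonneg_left hαβ
        (mul_nonneg (mul_nonneg (by positivity) (hb k)) (pow_nonneg hβ _))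
    calc α ^ (m + 2) = α ^ (m + 1) * α := pow_succ _ _
      _ ≤ ((1 / 2 ^ m) * a (m + 1) + ∑ k ∈ Icc 1 m, (1 / 2 ^ k) * b k * β ^ (m + 1 - k)) * α := by
        gcongr
      _ ≤ (1 / 2 ^ (m + 1)) * a (m + 2) +
          ∑ k ∈ Icc 1 (m + 1), (1 / 2 ^ k) * b k * β ^ (m + 2 - k) := by
        rw [add_mul, sum_mul, sum_Icc_succ_top (by omega)]
        linarith [sum_le_sum hsum]

theorem thm7_general (T : H →L[ℂ] H) (n : ℕ) (x : H) (hx : ‖x‖ = 1) :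
    ‖⟪T x, x⟫_ℂ‖ ^ n ≤ (1 / 2 ^ (n - 1)) * ‖⟪(T ^ n) x, x⟫_ℂ‖ +
      ∑ k ∈ Finset.Icc 1 (n - 1), (1 / 2 ^ k) * ‖(T ^ k) x‖ * ‖(ContinuousLinearMap.adjoint T) x‖ ^ (n - k) := by
  cases n with
  | zero => simp [hx]
  | succ m =>
    simpa using pow_succ_le_of_mul_le_half (a := fun k ↦ ‖⟪(T ^ k) x, x⟫_ℂ‖)
      (b := fun k ↦ ‖(T ^ k) x‖) (norm_nonneg _) (norm_inner_apply_le_norm_adjoint_apply T hx)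
      (fun _ ↦ norm_nonneg _) (by simp) (norm_inner_pow_apply_mul_le T hx) m

theorem thm7 (T : H →L[ℂ] H) (n : ℕ) (hn : 2 ≤ n) (x : H) (hx : ‖x‖ = 1) :
    ‖⟪T x, x⟫_ℂ‖ ^ n ≤ (1 / 2 ^ (n - 1)) * ‖⟪(T ^ n) x, x⟫_ℂ‖ +
      ∑ k ∈ Finset.Icc 1 (n - 1), (1 / 2 ^ k) * ‖(T ^ k) x‖ * ‖(ContinuousLinearMap.adjoint T) x‖ ^ (n - k) :=
  thm7_general T n x hx
end

section
/- Let T be a bounded linear operator on a complex Hilbert space H with w(T) = ‖T‖, and let n ≥ 2 be an integer. Then w(T)ⁿ = w(Tⁿ) = ‖Tⁿ‖ = ‖T‖ⁿ. -/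
open scoped InnerProductSpace

variable {H : Type*} [NormedAddCommGroup H] [InnerProductSpace ℂ H] [CompleteSpace H]

omit [CompleteSpace H] in
lemma numRadius_mem_le_norm (S : H →L[ℂ] H) :
    ∀ r ∈ {r : ℝ | ∃ x : H, ‖x‖ = 1 ∧ r = ‖⟪S x, x⟫_ℂ‖}, r ≤ ‖S‖ := by
  rintro r ⟨x, hx, rfl⟩
  calc ‖⟪S x, x⟫_ℂ‖ ≤ ‖S x‖ * ‖x‖ := norm_inner_le_norm _ _
    _ ≤ (‖S‖ * ‖x‖) * ‖x‖ := by gcongr; exact S.le_opNorm x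
    _ = ‖S‖ := by rw [hx]; ring

omit [CompleteSpace H] in
lemma numRadius_le_norm (S : H →L[ℂ] H) : numRadius S ≤ ‖S‖ :=
  Real.sSup_le (numRadius_mem_le_norm S) (norm_nonneg S)

omit [CompleteSpace H] in
lemma pow_approx (T : H →L[ℂ] H) (c : ℂ) (x : H) (hc : ‖c‖ ≤ ‖T‖) (m : ℕ) :
    ‖(T ^ (m + 1)) x - c ^ (m + 1) • x‖ ≤ ((m : ℝ) + 1) * ‖T‖ ^ m * ‖T x - c • x‖ := by
  induction m with
  | zero => simp
  | succ k ih =>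
    have h1 : (T ^ (k + 2)) x = T ((T ^ (k + 1)) x) := by rw [pow_succ']; rfl
    have key : (T ^ (k + 2)) x - c ^ (k + 2) • x
        = T ((T ^ (k + 1)) x - c ^ (k + 1) • x) + c ^ (k + 1) • (T x - c • x) := by
      rw [h1, map_sub, map_smul, smul_sub, smul_smul, show c ^ (k+1) * c = c ^ (k+2) by ring]
      abel
    rw [key]
    have hcc : ‖c‖ ^ (k + 1) ≤ ‖T‖ ^ (k + 1) := pow_le_pow_left₀ (norm_nonneg c) hc _
    calc ‖T ((T ^ (k + 1)) x - c ^ (k + 1) • x) + c ^ (k + 1) • (T x - c • x)‖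
        ≤ ‖T ((T ^ (k + 1)) x - c ^ (k + 1) • x)‖ + ‖c ^ (k + 1) • (T x - c • x)‖ :=
          norm_add_le _ _
      _ ≤ ‖T‖ * (((k : ℝ) + 1) * ‖T‖ ^ k * ‖T x - c • x‖) + ‖T‖ ^ (k + 1) * ‖T x - c • x‖ := by
          refine add_le_add ((T.le_opNorm _).trans (by gcongr)) ?_
          rw [norm_smul, norm_pow]
          exact mul_le_mul_of_nonneg_right hcc (norm_nonneg _)
      _ = (((k + 1 : ℕ) : ℝ) + 1) * ‖T‖ ^ (k + 1) * ‖T x - c • x‖ := by push_cast; ring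

omit [CompleteSpace H] in
lemma defect_sq (T : H →L[ℂ] H) (x : H) (hx : ‖x‖ = 1) :
    ‖T x - (⟪x, T x⟫_ℂ) • x‖ ^ 2 = ‖T x‖ ^ 2 - ‖⟪x, T x⟫_ℂ‖ ^ 2 := by
  set c := ⟪x, T x⟫_ℂ with hc
  have h1 : ⟪T x, c • x⟫_ℂ = c * (starRingEnd ℂ) c := by
    rw [inner_smul_right, ← inner_conj_symm, ← hc]
  rw [norm_sub_sq (𝕜 := ℂ), h1, Complex.mul_conj]
  have h2 : ‖c • x‖ = ‖c‖ := by rw [norm_smul, hx, mul_one]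
  rw [h2]
  simp [Complex.normSq_eq_norm_sq, ← Complex.ofReal_pow, Complex.ofReal_re]
  ring

omit [CompleteSpace H] in
lemma inner_split (x y : H) (hx : ‖x‖ = 1) (c : ℂ) :
    ⟪y, x⟫_ℂ = ⟪y - c • x, x⟫_ℂ + (starRingEnd ℂ) c := by
  rw [inner_sub_left, inner_smul_left, inner_self_eq_norm_sq_to_K, hx]
  push_cast
  ring

theorem power_equality (T : H →L[ℂ] H) (h : numRadius T = ‖T‖) (n : ℕ) (hn : 2 ≤ n) :
    (numRadius T) ^ n = numRadius (T ^ n) ∧ numRadius (T ^ n) = ‖T ^ n‖ ∧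
      ‖T ^ n‖ = ‖T‖ ^ n := by
  have hA : numRadius (T ^ n) ≤ ‖T ^ n‖ := numRadius_le_norm _
  have hB : ‖T ^ n‖ ≤ ‖T‖ ^ n := norm_pow_le' T (by omega)
  by_cases hT : ‖T‖ = 0
  · have hT0 : T = 0 := norm_eq_zero.mp hT
    have hTn : (T ^ n : H →L[ℂ] H) = 0 := by rw [hT0]; exact zero_pow (by omega)
    have hnr0 : numRadius ((0 : H →L[ℂ] H)) = 0 := by
      refine le_antisymm (Real.sSup_le ?_ le_rfl) (Real.sSup_nonneg ?_)
      · rintro r ⟨x, hx, rfl⟩; simp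
      · rintro r ⟨x, hx, rfl⟩; positivity
    rw [h, hT, hTn, hnr0, norm_zero]
    simp [zero_pow (show n ≠ 0 by omega)]
  · have hTpos : 0 < ‖T‖ := lt_of_le_of_ne (norm_nonneg T) (Ne.symm hT)
    obtain ⟨m, rfl⟩ : ∃ m, n = m + 1 := ⟨n - 1, by omega⟩
    -- key lower bound
    have hne : {r : ℝ | ∃ x : H, ‖x‖ = 1 ∧ r = ‖⟪T x, x⟫_ℂ‖}.Nonempty := by
      by_contra hemp
      rw [Set.not_nonempty_iff_eq_empty] at hemp
      have : numRadius T = 0 := by rw [numRadius, hemp, Real.sSup_empty]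
      rw [h] at this; exact hT this
    have hbdd : BddAbove {r : ℝ | ∃ x : H, ‖x‖ = 1 ∧ r = ‖⟪(T ^ (m+1)) x, x⟫_ℂ‖} :=
      ⟨‖T ^ (m+1)‖, fun r hr => numRadius_mem_le_norm _ r hr⟩
    have claim : ∀ ε : ℝ, 0 < ε → ε < ‖T‖ →
        (‖T‖ - ε) ^ (m+1) - ((m : ℝ) + 1) * ‖T‖ ^ m * Real.sqrt (2 * ‖T‖ * ε)
          ≤ numRadius (T ^ (m+1)) := by
      intro ε hε hεT
      have hlt : ‖T‖ - ε < sSup {r : ℝ | ∃ x : H, ‖x‖ = 1 ∧ r = ‖⟪T x, x⟫_ℂ‖} := by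
        have : sSup {r : ℝ | ∃ x : H, ‖x‖ = 1 ∧ r = ‖⟪T x, x⟫_ℂ‖} = numRadius T := rfl
        rw [this, h]; linarith
      obtain ⟨r, ⟨x, hx, rfl⟩, hr⟩ := exists_lt_of_lt_csSup hne hlt
      set c := ⟪x, T x⟫_ℂ with hcdef
      have hcnorm : ‖c‖ = ‖⟪T x, x⟫_ℂ‖ := by
        rw [hcdef, ← inner_conj_symm]
        exact RCLike.norm_conj _
      have hc1 : ‖T‖ - ε < ‖c‖ := by rw [hcnorm]; exact hr
      have hc2 : ‖c‖ ≤ ‖T‖ := by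
        rw [hcnorm]
        have := numRadius_mem_le_norm T ‖⟪T x, x⟫_ℂ‖ ⟨x, hx, rfl⟩
        exact this
      have hTx : ‖T x‖ ≤ ‖T‖ := by
        have := T.le_opNorm x; rw [hx, mul_one] at this; exact this
      have hd2 : ‖T x - c • x‖ ^ 2 ≤ 2 * ‖T‖ * ε := by
        rw [defect_sq T x hx, ← hcdef]
        nlinarith [norm_nonneg (T x), norm_nonneg c]
      have hd : ‖T x - c • x‖ ≤ Real.sqrt (2 * ‖T‖ * ε) :=
        (Real.le_sqrt (norm_nonneg _) (by positivity)).mpr hd2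
      have happrox : ‖(T ^ (m+1)) x - c ^ (m+1) • x‖
          ≤ ((m : ℝ) + 1) * ‖T‖ ^ m * Real.sqrt (2 * ‖T‖ * ε) := by
        refine (pow_approx T c x hc2 m).trans ?_
        gcongr
      -- lower bound on the inner product
      have hsplit := inner_split x ((T ^ (m+1)) x) hx (c ^ (m+1))
      have hlow : ‖c‖ ^ (m+1) - ‖(T ^ (m+1)) x - c ^ (m+1) • x‖ ≤ ‖⟪(T ^ (m+1)) x, x⟫_ℂ‖ := by
        rw [hsplit]
        have h4 : ‖(starRingEnd ℂ) (c ^ (m+1))‖ - ‖⟪(T ^ (m+1)) x - c ^ (m+1) • x, x⟫_ℂ‖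
            ≤ ‖⟪(T ^ (m+1)) x - c ^ (m+1) • x, x⟫_ℂ + (starRingEnd ℂ) (c ^ (m+1))‖ := by
          have := norm_add_le (-(⟪(T ^ (m+1)) x - c ^ (m+1) • x, x⟫_ℂ))
            (⟪(T ^ (m+1)) x - c ^ (m+1) • x, x⟫_ℂ + (starRingEnd ℂ) (c ^ (m+1)))
          simp only [neg_add_cancel_left, norm_neg] at this
          linarith
        refine le_trans ?_ h4
        have h5 : ‖⟪(T ^ (m+1)) x - c ^ (m+1) • x, x⟫_ℂ‖
            ≤ ‖(T ^ (m+1)) x - c ^ (m+1) • x‖ := by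
          have := norm_inner_le_norm (𝕜 := ℂ) ((T ^ (m+1)) x - c ^ (m+1) • x) x
          rw [hx, mul_one] at this; exact this
        have h6 : ‖(starRingEnd ℂ) (c ^ (m+1))‖ = ‖c‖ ^ (m+1) := by
          rw [RCLike.norm_conj, norm_pow]
        linarith
      have hmem : ‖⟪(T ^ (m+1)) x, x⟫_ℂ‖ ≤ numRadius (T ^ (m+1)) :=
        le_csSup hbdd ⟨x, hx, rfl⟩
      have hpow : (‖T‖ - ε) ^ (m+1) ≤ ‖c‖ ^ (m+1) :=
        pow_le_pow_left₀ (by linarith) hc1.le _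
      linarith
    -- limit as ε → 0⁺
    have hcont : Continuous (fun ε : ℝ =>
        (‖T‖ - ε) ^ (m+1) - ((m : ℝ) + 1) * ‖T‖ ^ m * Real.sqrt (2 * ‖T‖ * ε)) := by
      fun_prop
    have htend : Filter.Tendsto (fun ε : ℝ =>
        (‖T‖ - ε) ^ (m+1) - ((m : ℝ) + 1) * ‖T‖ ^ m * Real.sqrt (2 * ‖T‖ * ε))
        (nhdsWithin 0 (Set.Ioi 0)) (nhds (‖T‖ ^ (m+1))) := by
      have h0 := (hcont.tendsto 0).mono_left (nhdsWithin_le_nhds (s := Set.Ioi (0:ℝ)))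
      simpa using h0
    have hC : ‖T‖ ^ (m+1) ≤ numRadius (T ^ (m+1)) := by
      refine le_of_tendsto htend ?_
      filter_upwards [Ioo_mem_nhdsGT_of_mem (Set.mem_Ico.mpr ⟨le_rfl, hTpos⟩)] with ε hε
      exact claim ε hε.1 hε.2
    exact ⟨by rw [h]; linarith, by linarith, by linarith⟩
end

section
/- Let T be a bounded linear operator on a complex Hilbert space H. Then ‖T |T*| ‖ = ‖T²‖, where |T*| = (TT*)^{1/2}. -/
open scoped InnerProductSpace

variable {H : Type*} [NormedAddCommGroup H] [InnerProductSpace ℂ H] [CompleteSpace H]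

/-- The absolute value `|T| = (T*T)^{1/2}` of an operator. -/
noncomputable def absOp (T : H →L[ℂ] H) : H →L[ℂ] H :=
  CFC.sqrt (ContinuousLinearMap.adjoint T * T)

set_option maxHeartbeats 1000000 in
set_option synthInstance.maxHeartbeats 400000 in
theorem norm_mul_abs_adjoint (T : H →L[ℂ] H) :
    ‖T * absOp (ContinuousLinearMap.adjoint T)‖ = ‖T ^ 2‖ := by
  set A := absOp (ContinuousLinearMap.adjoint T) with hA
  have hnn : (0 : H →L[ℂ] H) ≤ T * ContinuousLinearMap.adjoint T := by
    simpa [ContinuousLinearMap.star_eq_adjoint] using mul_star_self_nonneg T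
  have hAdef : A = CFC.sqrt (T * ContinuousLinearMap.adjoint T) := by
    simp [hA, absOp, ContinuousLinearMap.adjoint_adjoint]
  have hAnn : (0 : H →L[ℂ] H) ≤ A := by rw [hAdef]; exact CFC.sqrt_nonneg _
  have hAsa : IsSelfAdjoint A := hAnn.isSelfAdjoint
  have hA2 : A * A = T * ContinuousLinearMap.adjoint T := by
    rw [hAdef]; exact CFC.sqrt_mul_sqrt_self _ hnn
  have key : (T * A) * star (T * A) = (T ^ 2) * star (T ^ 2) := by
    rw [star_mul, hAsa.star_eq,
      show T * A * (A * star T) = T * (A * A) * star T by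
        simp only [mul_assoc],
      hA2, star_pow, ContinuousLinearMap.star_eq_adjoint]
    simp only [pow_two, mul_assoc]
  have h1 := CStarRing.norm_self_mul_star (x := T * A)
  have h2 := CStarRing.norm_self_mul_star (x := T ^ 2)
  rw [key, h2] at h1
  exact (mul_self_inj (norm_nonneg _) (norm_nonneg _)).mp h1.symm
end
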